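/- arXiv:2507.04615 — 3 statements merged into one kernel-verified Lean document; each statement's English description precedes it below -/
import Mathlib

section
/- Let R be a finite nonempty multiset of integers, each at least 2, such that the sum over r in R of (r - 1/r) is strictly less than 23/6. Then R is one of the multisets {2}, {3}, {4}, or {2,2}. -/
/-!
Each summand `r - 1/r` is increasing in `r`, so it is at least `3/2`; hence `R` has at most
two elements. A singleton `{r}` needs `r - 1/r < 23/6 < 5 - 1/5`, so `r ≤ 4`. In a pair each
summand is below `23/6 - 3/2 = 7/3 < 3 - 1/3`, so both elements are `2`.
-/

universe u

lemma Multiset.monad_bind_pure_eq_map {α β : Type u} (s : Multiset α) (f : α → β) :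
    (do let a ← s; pure (f a)) = s.map f :=
  Multiset.bind_singleton s f

lemma sub_one_div_le_sub_one_div {K : Type*} [Field K] [LinearOrder K] [IsStrictOrderedRing K]
    {a b : K} (ha : 0 < a) (hab : a ≤ b) : a - 1 / a ≤ b - 1 / b := by
  have := one_div_le_one_div_of_le ha hab
  linarith

lemma Nat.lt_of_cast_sub_one_div_lt {m n : ℕ} (hm : 0 < m)
    (h : (n : ℚ) - 1 / n < m - 1 / m) : n < m := by
  by_contra! hmn
  have := sub_one_div_le_sub_one_div (a := (m : ℚ)) (b := n) (by exact_mod_cast hm)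
    (by exact_mod_cast hmn)
  linarith

lemma Nat.three_halves_le_cast_sub_one_div {r : ℕ} (hr : 2 ≤ r) : (3 / 2 : ℚ) ≤ r - 1 / r :=
  calc (3 / 2 : ℚ) = 2 - 1 / 2 := by norm_num
    _ ≤ r - 1 / r := sub_one_div_le_sub_one_div two_pos (by exact_mod_cast hr)

lemma Nat.eq_two_of_cast_sub_one_div_lt {r : ℕ} (hr : 2 ≤ r) (h : (r : ℚ) - 1 / r < 7 / 3) :
    r = 2 := by
  have : r < 3 :=
    Nat.lt_of_cast_sub_one_div_lt three_pos (by norm_num only [Nat.cast_ofNat]; linarith)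
  omega

theorem basket_enum_q_eq_6 (R : Multiset ℕ) (hne : R ≠ 0)
    (h2 : ∀ r ∈ R, 2 ≤ r)
    (hsum : (R.map (fun r => (r : ℚ) - 1 / r)).sum < 23 / 6) :
    R = {2} ∨ R = {3} ∨ R = {4} ∨ R = {2, 2} := by
  -- `hsum` elaborates with `R` lifted to a `Multiset ℚ` through the monad structure
  rw [Multiset.monad_bind_pure_eq_map, Multiset.map_map, Function.comp_def] at hsum
  have hcard : R.card < 3 := by
    have hle := Multiset.card_nsmul_le_sum (s := R.map (fun r : ℕ => (r : ℚ) - 1 / r))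
      (a := 3 / 2) (by simpa using fun r hr => Nat.three_halves_le_cast_sub_one_div (h2 r hr))
    rw [Multiset.card_map, nsmul_eq_mul] at hle
    exact_mod_cast (by linarith : (R.card : ℚ) < 3)
  have hpos : 0 < R.card := Multiset.card_pos.mpr hne
  interval_cases h : R.card
  · obtain ⟨a, rfl⟩ := Multiset.card_eq_one.mp h
    have ha2 := h2 a (by simp)
    have ha5 : a < 5 :=
      Nat.lt_of_cast_sub_one_div_lt (by norm_num) (by norm_num at hsum ⊢; linarith)
    interval_cases a <;> simp
  · obtain ⟨a, b, rfl⟩ := Multiset.card_eq_two.mp h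
    have ha2 := h2 a (by simp)
    have hb2 := h2 b (by simp)
    simp only [Multiset.insert_eq_cons, Multiset.map_cons, Multiset.map_singleton,
      Multiset.sum_cons, Multiset.sum_singleton] at hsum
    have hta := Nat.three_halves_le_cast_sub_one_div ha2
    have htb := Nat.three_halves_le_cast_sub_one_div hb2
    obtain rfl := Nat.eq_two_of_cast_sub_one_div_lt ha2 (by linarith)
    obtain rfl := Nat.eq_two_of_cast_sub_one_div_lt hb2 (by linarith)
    simp
end

section
/- There are exactly 20 finite nonempty multisets R of integers, each at least 2, such that the sum over r in R of (r - 1/r) is strictly less than 15/2, namely: {2}, {3}, {4}, {5}, {6}, {7}, {2,2}, {2,3}, {2,4}, {2,5}, {2,6}, {3,3}, {3,4}, {3,5}, {2,2,2}, {2,2,3}, {2,2,4}, {2,3,3}, {2,2,2,2}, {2,2,2,3}. -/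
/-!
Every entry `r ≥ 2` contributes `r - 1/r ≥ r - 1/2 ≥ 3/2`, so an entry `r` of a basket of size `n`
with total contribution below `15/2` satisfies `r - 1/2 + 3/2 (n - 1) < 15/2`, i.e. `2r + 3n < 19`.
Hence `n ≤ 4` and all entries are at most `(18 - 3n)/2`, which leaves 36 candidate multisets
to be checked by evaluation.
-/

def basketWeight (r : ℕ) : ℚ := r - 1 / r

lemma sub_half_le_basketWeight {r : ℕ} (hr : 2 ≤ r) : (r : ℚ) - 1 / 2 ≤ basketWeight r := by
  have hr' : (2 : ℚ) ≤ r := by exact_mod_cast hr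
  have : 1 / (r : ℚ) ≤ 1 / 2 := one_div_le_one_div_of_le two_pos hr'
  unfold basketWeight
  linarith

lemma three_halves_le_basketWeight {r : ℕ} (hr : 2 ≤ r) : 3 / 2 ≤ basketWeight r := by
  have hr' : (2 : ℚ) ≤ r := by exact_mod_cast hr
  linarith [sub_half_le_basketWeight hr]

lemma three_halves_mul_card_le_sum {S : Multiset ℕ} (h2 : ∀ r ∈ S, 2 ≤ r) :
    3 / 2 * (Multiset.card S : ℚ) ≤ (S.map basketWeight).sum := by
  have h := Multiset.card_nsmul_le_sum (s := S.map basketWeight) (a := (3 / 2 : ℚ)) <| by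
    simpa using fun r hr => three_halves_le_basketWeight (h2 r hr)
  rwa [Multiset.card_map, nsmul_eq_mul, mul_comm] at h

lemma le_sum_basketWeight {R : Multiset ℕ} (h2 : ∀ r ∈ R, 2 ≤ r) {r : ℕ} (hr : r ∈ R) :
    (r : ℚ) + 3 / 2 * Multiset.card R ≤ (R.map basketWeight).sum + 2 := by
  classical
  have hcard : (Multiset.card (R.erase r) : ℚ) + 1 = Multiset.card R := by
    exact_mod_cast Multiset.card_erase_add_one hr
  have hrest := three_halves_mul_card_le_sum (S := R.erase r)
    fun s hs => h2 s (Multiset.mem_of_mem_erase hs)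
  rw [← Multiset.sum_map_erase hr]
  linarith [sub_half_le_basketWeight (h2 r hr)]

lemma two_mul_add_three_mul_card_lt {R : Multiset ℕ} (h2 : ∀ r ∈ R, 2 ≤ r)
    (hsum : (R.map basketWeight).sum < 15 / 2) {r : ℕ} (hr : r ∈ R) :
    2 * r + 3 * Multiset.card R < 19 := by
  have h := le_sum_basketWeight h2 hr
  have : (2 * r + 3 * Multiset.card R : ℚ) < 19 := by linarith
  exact_mod_cast this

lemma exists_sym_eq_of_sum_basketWeight_lt {R : Multiset ℕ} (hR : R ≠ 0)
    (h2 : ∀ r ∈ R, 2 ≤ r) (hsum : (R.map basketWeight).sum < 15 / 2) :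
    ∃ n ∈ Finset.Icc 1 4, ∃ m ∈ (Finset.Icc 2 ((18 - 3 * n) / 2)).sym n, (m : Multiset ℕ) = R := by
  obtain ⟨r, hr⟩ := Multiset.exists_mem_of_ne_zero hR
  have hbound : ∀ s ∈ R, 2 * s + 3 * Multiset.card R < 19 := fun s hs =>
    two_mul_add_three_mul_card_lt h2 hsum hs
  refine ⟨Multiset.card R, ?_, ⟨R, rfl⟩, ?_, rfl⟩
  · have := Multiset.card_pos.2 hR
    have := h2 r hr
    have := hbound r hr
    simp only [Finset.mem_Icc]
    omega
  · refine Finset.mem_sym_iff.2 fun s hs => ?_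
    have := h2 s hs
    have := hbound s hs
    simp only [Finset.mem_Icc]
    omega

-- In `R.map fun r => (r : ℚ) - 1 / r` the cast is applied by first coercing `R` to `Multiset ℚ`
-- through the multiset monad.
lemma sum_map_cast_sub_one_div (R : Multiset ℕ) :
    (R.map (fun r => (r : ℚ) - 1 / r)).sum = (R.map basketWeight).sum := by
  simp only [Multiset.pure_def, Multiset.bind_def, Multiset.bind_singleton, Multiset.map_map,
    Function.comp_def]
  rfl

theorem basket_enum_q_ge_7 (R : Multiset ℕ) :
    (R ≠ 0 ∧ (∀ r ∈ R, 2 ≤ r) ∧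
      (R.map (fun r => (r : ℚ) - 1 / r)).sum < 15 / 2) ↔
    R ∈ ([{2}, {3}, {4}, {5}, {6}, {7}, {2, 2}, {2, 3}, {2, 4}, {2, 5},
      {2, 6}, {3, 3}, {3, 4}, {3, 5}, {2, 2, 2}, {2, 2, 3}, {2, 2, 4},
      {2, 3, 3}, {2, 2, 2, 2}, {2, 2, 2, 3}] : List (Multiset ℕ)) := by
  constructor
  · rintro ⟨hR, h2, hsum⟩
    rw [sum_map_cast_sub_one_div] at hsum
    obtain ⟨n, hn, m, hm, rfl⟩ := exists_sym_eq_of_sum_basketWeight_lt hR h2 hsum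
    clear hR h2
    revert n m
    decide +kernel
  · revert R
    decide +kernel
end

section
/- Let q and J be positive integers with q ≥ 7 and J dividing q, such that (q/J)² divides 200 and J divides 200/(q/J)². If moreover, writing J = p1^{a1}···pk^{ak} as a product of distinct prime powers, the inequality Σᵢ (pᵢ^{aᵢ} - 1/pᵢ^{aᵢ}) ≤ 64 - (q²+2q-4)/(4q²)·200 holds, then (q, J) is one of: (40, 8), (20, 2), (20, 4), (20, 10), (20, 20), (10, 1), (10, 2), (10, 5), (10, 10), (8, 8). -/
/-!
Write `q = J * m`. Then `m ^ 2 ∣ 200` forces `m ∣ 10`, and `J` is a divisor of `200 / m ^ 2`,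
which leaves finitely many pairs. For `q ≥ 2` the right-hand side of the inequality is at most
`14`, while the prime power sum of any `J` divisible by `5 ^ 2` is at least `25 - 1/25`; this
discards every pair but `(40, 40)`, where the sum `(8 - 1/8) + (5 - 1/5)` exceeds `93/8`.
-/

def sumPrimePowSubInv (n : ℕ) : ℚ :=
  n.factorization.sum fun p k => (p : ℚ) ^ k - 1 / (p : ℚ) ^ k

lemma pow_sub_one_div_pow_le_of_le {x : ℚ} (hx : 1 ≤ x) {k l : ℕ} (hkl : k ≤ l) :
    x ^ k - 1 / x ^ k ≤ x ^ l - 1 / x ^ l := by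
  have hxk : x ^ k ≤ x ^ l := pow_le_pow_right₀ hx hkl
  have : 1 / x ^ l ≤ 1 / x ^ k := one_div_le_one_div_of_le (by positivity) hxk
  linarith

lemma sumPrimePowSubInv_prime_pow {p : ℕ} (hp : p.Prime) (k : ℕ) :
    sumPrimePowSubInv (p ^ k) = (p : ℚ) ^ k - 1 / (p : ℚ) ^ k := by
  rw [sumPrimePowSubInv, hp.factorization_pow, Finsupp.sum_single_index (by simp)]

lemma sumPrimePowSubInv_mul {a b : ℕ} (hab : a.Coprime b) :
    sumPrimePowSubInv (a * b) = sumPrimePowSubInv a + sumPrimePowSubInv b := by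
  rw [sumPrimePowSubInv, Nat.factorization_mul_of_coprime hab,
    Finsupp.sum_add_index_of_disjoint hab.disjoint_primeFactors]
  rfl

lemma pow_sub_one_div_pow_le_sumPrimePowSubInv {n p k : ℕ} (hp : p.Prime) (hn : n ≠ 0)
    (hk : p ^ k ∣ n) : (p : ℚ) ^ k - 1 / (p : ℚ) ^ k ≤ sumPrimePowSubInv n := by
  have hkv : k ≤ n.factorization p := (hp.pow_dvd_iff_le_factorization hn).1 hk
  have hterm : ∀ r ∈ n.factorization.support,
      0 ≤ (r : ℚ) ^ n.factorization r - 1 / (r : ℚ) ^ n.factorization r := fun r hr => by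
    have hr1 : (1 : ℚ) ≤ r := mod_cast (Nat.prime_of_mem_primeFactors hr).one_le
    simpa using pow_sub_one_div_pow_le_of_le hr1 (Nat.zero_le (n.factorization r))
  rcases Nat.eq_zero_or_pos k with rfl | hk0
  · rw [pow_zero, div_one, sub_self]
    exact Finset.sum_nonneg hterm
  · calc (p : ℚ) ^ k - 1 / (p : ℚ) ^ k
          ≤ (p : ℚ) ^ n.factorization p - 1 / (p : ℚ) ^ n.factorization p :=
        pow_sub_one_div_pow_le_of_le (mod_cast hp.one_le) hkv
      _ ≤ sumPrimePowSubInv n :=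
        Finset.single_le_sum hterm (Finsupp.mem_support_iff.2 (by omega))

lemma quarter_le_of_two_le {q : ℚ} (hq : 2 ≤ q) : 1 / 4 ≤ (q ^ 2 + 2 * q - 4) / (4 * q ^ 2) := by
  rw [div_le_div_iff₀ (by norm_num) (by positivity)]
  nlinarith

lemma dvd_ten_of_sq_dvd_two_hundred {m : ℕ} (h : m ^ 2 ∣ 200) : m ∣ 10 := by
  have hm : m < 15 := by
    by_contra! hm
    have := Nat.le_of_dvd (by norm_num) h
    nlinarith
  interval_cases m <;> simp_all

lemma pair_mem_of_sq_dvd_two_hundred {J m : ℕ} (hq : 7 ≤ J * m) (hsq : m ^ 2 ∣ 200) (hJ : J ∣ 200 / m ^ 2)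
    (h25 : ¬ 25 ∣ J) :
    (J * m, J) ∈ ({(40, 40), (40, 8), (20, 2), (20, 4), (20, 10), (20, 20), (10, 1), (10, 2),
      (10, 5), (10, 10), (8, 8)} : Set (ℕ × ℕ)) := by
  have hm : m ∈ Nat.divisors 10 := Nat.mem_divisors.2 ⟨dvd_ten_of_sq_dvd_two_hundred hsq, by norm_num⟩
  simp only [Nat.divisors_ofNat, Finset.mem_insert, Finset.mem_singleton] at hm
  rcases hm with rfl | rfl | rfl | rfl <;>
  · have hJ' : J ∈ Nat.divisors (200 / _ ^ 2) := Nat.mem_divisors.2 ⟨hJ, by norm_num⟩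
    simp only [Nat.reducePow, Nat.reduceDiv, Nat.divisors_ofNat, Finset.mem_insert,
      Finset.mem_singleton] at hJ'
    rcases hJ' with rfl | rfl | rfl | rfl | rfl | rfl | rfl | rfl | rfl | rfl | rfl | rfl <;>
      simp_all

theorem qJ_enum_200_general (q J : ℕ) (hq : 7 ≤ q) (hdvd : J ∣ q)
    (hsq : (q / J) ^ 2 ∣ 200) (hJdvd : J ∣ 200 / (q / J) ^ 2)
    (hineq : ∑ p ∈ J.factorization.support,
        ((p : ℚ) ^ (J.factorization p) - 1 / (p : ℚ) ^ (J.factorization p)) ≤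
      64 - (((q : ℚ) ^ 2 + 2 * q - 4) / (4 * q ^ 2)) * 200) :
    (q, J) ∈ ({(40, 8), (20, 2), (20, 4), (20, 10), (20, 20), (10, 1), (10, 2),
      (10, 5), (10, 10), (8, 8)} : Set (ℕ × ℕ)) := by
  change sumPrimePowSubInv J ≤ _ at hineq
  obtain ⟨m, rfl⟩ := hdvd
  have hJ : J ≠ 0 := by
    rintro rfl
    simp at hsq
  rw [Nat.mul_div_cancel_left m (Nat.pos_of_ne_zero hJ)] at hsq hJdvd
  have hrhs : (1 : ℚ) / 4 ≤ ((↑(J * m) : ℚ) ^ 2 + 2 * ↑(J * m) - 4) / (4 * ↑(J * m) ^ 2) :=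
    quarter_le_of_two_le (by exact_mod_cast hq.trans' (by norm_num))
  have h25 : ¬ 25 ∣ J := fun h25 => by
    have := pow_sub_one_div_pow_le_sumPrimePowSubInv (k := 2) Nat.prime_five hJ h25
    norm_num at this
    linarith
  rcases pair_mem_of_sq_dvd_two_hundred hq hsq hJdvd h25 with h40 | hmem
  · obtain ⟨hq40, rfl⟩ := Prod.mk.inj h40
    have hS40 : sumPrimePowSubInv 40 = (8 - 1 / 8) + (5 - 1 / 5) := by
      rw [show 40 = 2 ^ 3 * 5 ^ 1 by norm_num, sumPrimePowSubInv_mul (by norm_num),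
        sumPrimePowSubInv_prime_pow Nat.prime_two, sumPrimePowSubInv_prime_pow Nat.prime_five]
      norm_num
    rw [hS40, hq40] at hineq
    norm_num at hineq
  · exact hmem

theorem qJ_enum_200 (q J : ℕ) (hq : 7 ≤ q) (hJ : 0 < J) (hdvd : J ∣ q)
    (hsq : (q / J) ^ 2 ∣ 200) (hJdvd : J ∣ 200 / (q / J) ^ 2)
    (hineq : ∑ p ∈ J.factorization.support,
        ((p : ℚ) ^ (J.factorization p) - 1 / (p : ℚ) ^ (J.factorization p)) ≤
      64 - (((q : ℚ) ^ 2 + 2 * q - 4) / (4 * q ^ 2)) * 200) :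
    (q, J) ∈ ({(40, 8), (20, 2), (20, 4), (20, 10), (20, 20), (10, 1), (10, 2),
      (10, 5), (10, 10), (8, 8)} : Set (ℕ × ℕ)) :=
  qJ_enum_200_general q J hq hdvd hsq hJdvd hineq
end
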